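/- arXiv:2210.12676 — 2 statements merged into one kernel-verified Lean document; each statement's English description precedes it below -/
import Mathlib

section
/- Let (M, M̃) be a Feller topological monoid, let (x_n)_{n≥1} ⊆ M be a sequence such that ∏_{n≥1} χ(x_n) > 0 for some χ ∈ M̃, and let {P, Q} be a partition of ℕ. Then (⊕_{n∈P} x_n) ⊕ (⊕_{n∈Q} x_n) = ⊕_{n∈ℕ} x_n. -/
open Filter Topology MeasureTheory

/-- A determining class of characters making `(M, S)` a Feller topological monoid:
`S` is a nonempty countable set of Borel-measurable characters `χ : M → [0,1]`,
closed under pointwise multiplication, such that for every sequence in `M`: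
(i) all characters tend to `0` along the sequence iff the sequence tends to the
point at infinity (the cocompact filter), and (ii) if all characters converge along
the sequence and the limit function is not identically zero, then the sequence
converges in `M` and the limits are the values of the characters at the limit point. -/
structure FellerClass (M : Type*) [TopologicalSpace M] [CommMonoid M]
    [MeasurableSpace M] (S : Set (M → ℝ)) : Prop where
  nonempty : S.Nonempty
  countable : S.Countable
  mem_Icc : ∀ χ ∈ S, ∀ x : M, χ x ∈ Set.Icc (0 : ℝ) 1
  map_one : ∀ χ ∈ S, χ 1 = 1
  map_mul : ∀ χ ∈ S, ∀ x y : M, χ (x * y) = χ x * χ y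
  measurable : ∀ χ ∈ S, Measurable χ
  mul_mem : ∀ χ₁ ∈ S, ∀ χ₂ ∈ S, (fun x => χ₁ x * χ₂ x) ∈ S
  tendsto_zero_iff : ∀ x : ℕ → M,
    (∀ χ ∈ S, Tendsto (fun n => χ (x n)) atTop (𝓝 0)) ↔
      Tendsto x atTop (cocompact M)
  limit_exists : ∀ (x : ℕ → M) (ψ : (M → ℝ) → ℝ),
    (∀ χ ∈ S, Tendsto (fun n => χ (x n)) atTop (𝓝 (ψ χ))) →
    (∃ χ ∈ S, ψ χ ≠ 0) →
    ∃ a : M, Tendsto x atTop (𝓝 a) ∧ ∀ χ ∈ S, ψ χ = χ a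

private lemma char_prod' {M : Type*} [CommMonoid M] {χ : M → ℝ}
    (h1 : χ 1 = 1) (hm : ∀ x y : M, χ (x * y) = χ x * χ y)
    {ι : Type*} (s : Finset ι) (f : ι → M) :
    χ (∏ i ∈ s, f i) = ∏ i ∈ s, χ (f i) := by
  induction s using Finset.cons_induction with
  | empty => simpa
  | cons a s ha ih => rw [Finset.prod_cons, Finset.prod_cons, hm, ih]


/-- if the infinite product `∏_{n≥1} χ(x_n)` is strictly positive
for some character `χ ∈ S`, and `{P, Q}` is a partition of `ℕ`, then the sum
over `P`, the sum over `Q` and the sum over all of `ℕ` of the `x_n` exist in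
`M` (as limits of the corresponding partial sums), and
`(⊕_{n∈P} x_n) ⊕ (⊕_{n∈Q} x_n) = ⊕_{n∈ℕ} x_n`. -/
theorem FellerClass.sum_partition {M : Type*} [TopologicalSpace M] [CommMonoid M]
    [ContinuousMul M] [LocallyCompactSpace M] [SecondCountableTopology M] [T2Space M]
    [MeasurableSpace M] [BorelSpace M]
    {S : Set (M → ℝ)} (hS : FellerClass M S) (x : ℕ → M)
    (h : ∃ χ ∈ S, ∃ c : ℝ, 0 < c ∧
      Tendsto (fun m => ∏ i ∈ Finset.range m, χ (x i)) atTop (𝓝 c))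
    (P Q : Set ℕ) [DecidablePred (· ∈ P)] [DecidablePred (· ∈ Q)]
    (hPQ : P ∪ Q = Set.univ) (hPQdisj : P ∩ Q = ∅) :
    ∃ a b t : M,
      Tendsto (fun N => ∏ i ∈ Finset.range N, if i ∈ P then x i else 1) atTop (𝓝 a) ∧
      Tendsto (fun N => ∏ i ∈ Finset.range N, if i ∈ Q then x i else 1) atTop (𝓝 b) ∧
      Tendsto (fun N => ∏ i ∈ Finset.range N, x i) atTop (𝓝 t) ∧
      a * b = t := by
  obtain ⟨χ₀, hχ₀S, c, hc, hχ₀⟩ := h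
  -- generic facts about partial products of characters of a sequence
  have nonneg : ∀ χ ∈ S, ∀ (y : ℕ → M) (N : ℕ),
      (0:ℝ) ≤ ∏ i ∈ Finset.range N, χ (y i) := by
    intro χ hχ y N
    exact Finset.prod_nonneg fun i _ => (hS.mem_Icc χ hχ (y i)).1
  have anti : ∀ χ ∈ S, ∀ y : ℕ → M,
      Antitone (fun N => ∏ i ∈ Finset.range N, χ (y i)) := by
    intro χ hχ y
    apply antitone_nat_of_succ_le
    intro N
    rw [Finset.prod_range_succ]
    calc (∏ i ∈ Finset.range N, χ (y i)) * χ (y N)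
        ≤ (∏ i ∈ Finset.range N, χ (y i)) * 1 :=
          mul_le_mul_of_nonneg_left (hS.mem_Icc χ hχ (y N)).2 (nonneg χ hχ y N)
      _ = _ := mul_one _
  have conv : ∀ χ ∈ S, ∀ y : ℕ → M,
      Tendsto (fun N => ∏ i ∈ Finset.range N, χ (y i)) atTop
        (𝓝 (⨅ N, ∏ i ∈ Finset.range N, χ (y i))) := by
    intro χ hχ y
    exact tendsto_atTop_ciInf (anti χ hχ y) ⟨0, fun r ⟨N, hN⟩ => hN ▸ nonneg χ hχ y N⟩
  -- helper: construct the limit of partial products over a restricted sequence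
  have key : ∀ y : ℕ → M, (∀ i, y i = x i ∨ y i = 1) →
      ∃ a : M, Tendsto (fun N => ∏ i ∈ Finset.range N, y i) atTop (𝓝 a) ∧
        ∀ χ ∈ S, (⨅ N, ∏ i ∈ Finset.range N, χ (y i)) = χ a := by
    intro y hy
    have hcv : ∀ χ ∈ S, Tendsto (fun N => χ (∏ i ∈ Finset.range N, y i)) atTop
        (𝓝 (⨅ N, ∏ i ∈ Finset.range N, χ (y i))) := by
      intro χ hχ
      have := conv χ hχ y
      simpa [char_prod' (hS.map_one χ hχ) (hS.map_mul χ hχ)] using this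
    have hne : (⨅ N, ∏ i ∈ Finset.range N, χ₀ (y i)) ≠ 0 := by
      have hle : ∀ N, c ≤ ∏ i ∈ Finset.range N, χ₀ (y i) := by
        intro N
        have h1 : (∏ i ∈ Finset.range N, χ₀ (x i)) ≤ ∏ i ∈ Finset.range N, χ₀ (y i) := by
          apply Finset.prod_le_prod
          · intro i _; exact (hS.mem_Icc χ₀ hχ₀S (x i)).1
          · intro i _
            rcases hy i with h' | h'
            · rw [h']
            · rw [h', hS.map_one χ₀ hχ₀S]; exact (hS.mem_Icc χ₀ hχ₀S (x i)).2
        refine le_trans ?_ h1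
        refine le_of_tendsto hχ₀ ?_
        filter_upwards [eventually_ge_atTop N] with m hm
        exact anti χ₀ hχ₀S x hm
      have : c ≤ ⨅ N, ∏ i ∈ Finset.range N, χ₀ (y i) := le_ciInf hle
      linarith
    obtain ⟨a, ha, ha'⟩ := hS.limit_exists _ (fun χ => ⨅ N, ∏ i ∈ Finset.range N, χ (y i))
      hcv ⟨χ₀, hχ₀S, hne⟩
    exact ⟨a, ha, ha'⟩
  obtain ⟨a, haT, -⟩ := key (fun i => if i ∈ P then x i else 1)
    (fun i => by by_cases hi : i ∈ P <;> simp [hi])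
  obtain ⟨b, hbT, -⟩ := key (fun i => if i ∈ Q then x i else 1)
    (fun i => by by_cases hi : i ∈ Q <;> simp [hi])
  refine ⟨a, b, a * b, haT, hbT, ?_, rfl⟩
  have heq : ∀ N, (∏ i ∈ Finset.range N, x i) =
      (∏ i ∈ Finset.range N, if i ∈ P then x i else 1) *
      (∏ i ∈ Finset.range N, if i ∈ Q then x i else 1) := by
    intro N
    rw [← Finset.prod_mul_distrib]
    apply Finset.prod_congr rfl
    intro i _
    have hiPQ : i ∈ P ∨ i ∈ Q := by
      have : i ∈ P ∪ Q := hPQ ▸ Set.mem_univ i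
      exact this
    have hnot : ¬(i ∈ P ∧ i ∈ Q) := by
      intro ⟨h1, h2⟩
      have : i ∈ P ∩ Q := ⟨h1, h2⟩
      rw [hPQdisj] at this
      exact this
    rcases hiPQ with hi | hi
    · have : i ∉ Q := fun h' => hnot ⟨hi, h'⟩
      simp [hi, this]
    · have : i ∉ P := fun h' => hnot ⟨h', hi⟩
      simp [hi, this]
  simp only [heq]
  exact haT.mul hbT
end

section
/- Let (M, M̃) be a Feller topological monoid and let μ, ν, λ be Borel probability measures on M. Then μ ⊕ ν = λ if and only if for every χ ∈ M̃, (∫_M χ(x) μ(dx)) · (∫_M χ(x) ν(dx)) = ∫_M χ(x) λ(dx). -/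
open Filter Topology MeasureTheory

/-- The `⊕`-convolution of two Borel (probability) measures on a topological
monoid: the pushforward of the product measure under `(x, y) ↦ x ⊕ y`. -/
noncomputable def mulConv {M : Type*} [CommMonoid M] [MeasurableSpace M]
    (μ ν : Measure M) : Measure M :=
  Measure.map (fun p : M × M => p.1 * p.2) (μ.prod ν)

section Aux

variable {M : Type*} [TopologicalSpace M] [CommMonoid M] [MeasurableSpace M] {S : Set (M → ℝ)}

/-- No point is annihilated by all characters of a Feller class. -/
lemma FellerClass.exists_ne_zero (hS : FellerClass M S) (x : M) : ∃ χ ∈ S, χ x ≠ 0 := by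
  by_contra hcon
  push_neg at hcon
  have ht : Tendsto (fun _ : ℕ => x) atTop (cocompact M) :=
    (hS.tendsto_zero_iff _).1 fun χ hχ => by
      simpa [hcon χ hχ] using (tendsto_const_nhds : Tendsto (fun _ : ℕ => (0 : ℝ)) atTop (𝓝 0))
  have hx : ∀ᶠ n : ℕ in atTop, (fun _ : ℕ => x) n ∈ ({x}ᶜ : Set M) :=
    ht.eventually_mem (Filter.mem_cocompact.2 ⟨{x}, isCompact_singleton, le_rfl⟩)
  obtain ⟨n, hn⟩ := hx.exists
  exact hn rfl

/-- The characters of a Feller class separate points. -/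
lemma FellerClass.eq_of_forall [T2Space M] (hS : FellerClass M S) {x y : M}
    (h : ∀ χ ∈ S, χ x = χ y) : x = y := by
  obtain ⟨χ₀, hχ₀, hne⟩ := hS.exists_ne_zero x
  set z : ℕ → M := fun n => if Even n then x else y with hz
  have hconv : ∀ χ ∈ S, Tendsto (fun n => χ (z n)) atTop (𝓝 ((fun χ : M → ℝ => χ x) χ)) := by
    intro χ hχ
    have he : (fun n => χ (z n)) = fun _ => χ x := by
      funext n
      by_cases hn : Even n <;> simp [hz, hn, h χ hχ]
    rw [he]
    exact tendsto_const_nhds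
  obtain ⟨a, ha, -⟩ := hS.limit_exists z (fun χ => χ x) hconv ⟨χ₀, hχ₀, hne⟩
  have h2 : Tendsto (fun n : ℕ => 2 * n) atTop atTop :=
    tendsto_atTop_mono (fun n => by simp; omega) tendsto_id
  have h3 : Tendsto (fun n : ℕ => 2 * n + 1) atTop atTop :=
    tendsto_atTop_mono (fun n => by simp; omega) tendsto_id
  have hxa : Tendsto (fun _ : ℕ => x) atTop (𝓝 a) := by
    have := ha.comp h2
    have he : (fun n : ℕ => z (2 * n)) = fun _ => x := by
      funext n; simp [hz, even_two_mul]
    rwa [Function.comp_def, he] at this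
  have hya : Tendsto (fun _ : ℕ => y) atTop (𝓝 a) := by
    have := ha.comp h3
    have he : (fun n : ℕ => z (2 * n + 1)) = fun _ => y := by
      funext n
      have : ¬ Even (2 * n + 1) := by simp [Nat.even_add_one, even_two_mul]
      simp [hz, this]
    rwa [Function.comp_def, he] at this
  exact (tendsto_nhds_unique tendsto_const_nhds hxa).trans
    (tendsto_nhds_unique tendsto_const_nhds hya).symm

/-- Probability measures on a Feller topological monoid are determined by the
integrals of the characters of the Feller class. -/
lemma FellerClass.measure_ext {M : Type*} [TopologicalSpace M] [CommMonoid M]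
    [T2Space M] [MeasurableSpace M] [BorelSpace M]
    {S : Set (M → ℝ)} (hS : FellerClass M S) (μ₁ μ₂ : Measure M)
    [IsProbabilityMeasure μ₁] [IsProbabilityMeasure μ₂]
    (h : ∀ χ ∈ S, ∫ x, χ x ∂μ₁ = ∫ x, χ x ∂μ₂) : μ₁ = μ₂ := by
  classical
  obtain ⟨f, hfS⟩ := hS.countable.exists_eq_range hS.nonempty
  have hfmem : ∀ n, f n ∈ S := fun n => hfS ▸ Set.mem_range_self n
  have hrange : ∀ χ ∈ S, ∃ m, f m = χ := by
    intro χ hχ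
    rcases (hfS ▸ hχ : χ ∈ Set.range f) with ⟨m, hm⟩
    exact ⟨m, hm⟩
  set Φ : M → (ℕ → Set.Icc (0:ℝ) 1) := fun x n => ⟨f n x, hS.mem_Icc _ (hfmem n) x⟩ with hΦdef
  have hΦm : Measurable Φ := measurable_pi_iff.2 fun n => (hS.measurable _ (hfmem n)).subtype_mk
  have hΦinj : Function.Injective Φ := by
    intro x y hxy
    refine hS.eq_of_forall fun χ hχ => ?_
    obtain ⟨m, rfl⟩ := hrange χ hχ
    exact Subtype.ext_iff.1 (congrFun hxy m)
  haveI h1p : IsProbabilityMeasure (μ₁.map Φ) := Measure.isProbabilityMeasure_map hΦm.aemeasurable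
  haveI h2p : IsProbabilityMeasure (μ₂.map Φ) := Measure.isProbabilityMeasure_map hΦm.aemeasurable
  have hint : ∀ (r : C(ℕ → Set.Icc (0:ℝ) 1, ℝ)) (θ : Measure (ℕ → Set.Icc (0:ℝ) 1))
      [IsProbabilityMeasure θ], Integrable (⇑r) θ := fun r θ _ =>
    r.continuous.integrable_of_hasCompactSupport (HasCompactSupport.of_compactSpace _)
  -- Step A : equal integrals of all continuous functions on the cube, via Stone-Weierstrass
  have key : ∀ g : C(ℕ → Set.Icc (0:ℝ) 1, ℝ),
      ∫ k, g k ∂(μ₁.map Φ) = ∫ k, g k ∂(μ₂.map Φ) := by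
    set coords : ℕ → C(ℕ → Set.Icc (0:ℝ) 1, ℝ) :=
      fun m => ⟨fun k => (k m : ℝ), continuous_subtype_val.comp (continuous_apply m)⟩ with hcoords
    set A : Subalgebra ℝ C(ℕ → Set.Icc (0:ℝ) 1, ℝ) := Algebra.adjoin ℝ (Set.range coords) with hA
    have hsep : A.SeparatesPoints := by
      intro k k' hkk'
      have hex : ∃ m, k m ≠ k' m := by
        by_contra hc
        push_neg at hc
        exact hkk' (funext hc)
      obtain ⟨m, hm⟩ := hex
      refine ⟨coords m, ⟨coords m, Algebra.subset_adjoin (Set.mem_range_self m), rfl⟩, ?_⟩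
      simp only [hcoords, ContinuousMap.coe_mk]
      exact fun hh => hm (Subtype.ext hh)
    -- equal integrals of finite products of coordinates
    have hmono : ∀ p ∈ Submonoid.closure (Set.range coords),
        ∫ k, p k ∂(μ₁.map Φ) = ∫ k, p k ∂(μ₂.map Φ) := by
      have H : ∀ p ∈ Submonoid.closure (Set.range coords),
          (∫ k, p k ∂(μ₁.map Φ) = ∫ k, p k ∂(μ₂.map Φ)) ∧
            ((p = 1) ∨ ∃ χ ∈ S, ∀ x : M, p (Φ x) = χ x) := by
        intro p hp
        induction hp using Submonoid.closure_induction with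
        | mem q hq =>
          obtain ⟨m, rfl⟩ := hq
          constructor
          · rw [integral_map hΦm.aemeasurable (coords m).continuous.aestronglyMeasurable,
              integral_map hΦm.aemeasurable (coords m).continuous.aestronglyMeasurable]
            exact h (f m) (hfmem m)
          · exact Or.inr ⟨f m, hfmem m, fun x => rfl⟩
        | one =>
          constructor
          · simp
          · exact Or.inl rfl
        | mul q r hq hr ihq ihr =>
          rcases ihq.2 with hq1 | ⟨χq, hχq, hvq⟩
          · subst hq1
            simpa using ihr
          rcases ihr.2 with hr1 | ⟨χr, hχr, hvr⟩
          · subst hr1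
            simpa using ihq
          have hχ : (fun x => χq x * χr x) ∈ S := hS.mul_mem _ hχq _ hχr
          have hval : ∀ x : M, (q * r) (Φ x) = χq x * χr x := fun x => by
            simp [ContinuousMap.mul_apply, hvq x, hvr x]
          constructor
          · rw [integral_map hΦm.aemeasurable (q * r).continuous.aestronglyMeasurable,
              integral_map hΦm.aemeasurable (q * r).continuous.aestronglyMeasurable]
            simp only [hval]
            exact h _ hχ
          · exact Or.inr ⟨_, hχ, hval⟩
      exact fun p hp => (H p hp).1
    -- equal integrals of all elements of the subalgebra
    have hspan : ∀ p ∈ Submodule.span ℝ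
        (↑(Submonoid.closure (Set.range coords)) : Set C(ℕ → Set.Icc (0:ℝ) 1, ℝ)),
        ∫ k, p k ∂(μ₁.map Φ) = ∫ k, p k ∂(μ₂.map Φ) := by
      intro p hp'
      induction hp' using Submodule.span_induction with
      | mem q hq => exact hmono q hq
      | zero => simp
      | add q r hq hr ihq ihr =>
        simp only [ContinuousMap.add_apply]
        rw [integral_add (hint q _) (hint r _), integral_add (hint q _) (hint r _), ihq, ihr]
      | smul a q hq ih =>
        simp only [ContinuousMap.smul_apply, smul_eq_mul]
        rw [integral_const_mul, integral_const_mul, ih]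
    have hAint : ∀ p ∈ A, ∫ k, p k ∂(μ₁.map Φ) = ∫ k, p k ∂(μ₂.map Φ) := by
      intro p hp
      refine hspan p ?_
      have := Algebra.adjoin_eq_span ℝ (Set.range coords)
      rw [hA] at hp
      rw [← this]
      exact hp
    -- pass to the closure
    intro g
    by_contra hne
    set D : ℝ := ∫ k, g k ∂(μ₁.map Φ) - ∫ k, g k ∂(μ₂.map Φ) with hD
    have hDne : D ≠ 0 := sub_ne_zero.2 hne
    have hDpos : 0 < |D| := abs_pos.2 hDne
    obtain ⟨p, hplt⟩ :=
      ContinuousMap.exists_mem_subalgebra_near_continuousMap_of_separatesPoints A hsep g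
        (|D| / 3) (by positivity)
    have hb : ∀ (θ : Measure (ℕ → Set.Icc (0:ℝ) 1)) [IsProbabilityMeasure θ],
        |(∫ k, (p : C(ℕ → Set.Icc (0:ℝ) 1, ℝ)) k ∂θ) - ∫ k, g k ∂θ| ≤ |D| / 3 := by
      intro θ _
      rw [← integral_sub (hint _ θ) (hint g θ)]
      have hle : ∀ k, ‖((p : C(ℕ → Set.Icc (0:ℝ) 1, ℝ)) - g) k‖ ≤
          ‖(p : C(ℕ → Set.Icc (0:ℝ) 1, ℝ)) - g‖ := fun k =>
        ContinuousMap.norm_coe_le_norm _ k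
      have := norm_integral_le_of_norm_le_const (μ := θ)
        (f := fun k => (p : C(ℕ → Set.Icc (0:ℝ) 1, ℝ)) k - g k)
        (C := ‖(p : C(ℕ → Set.Icc (0:ℝ) 1, ℝ)) - g‖)
        (Filter.Eventually.of_forall fun k => by
          simpa [ContinuousMap.sub_apply] using hle k)
      simp only [probReal_univ, mul_one] at this
      calc |(∫ k, ((p : C(ℕ → Set.Icc (0:ℝ) 1, ℝ)) k - g k) ∂θ)|
          ≤ ‖(p : C(ℕ → Set.Icc (0:ℝ) 1, ℝ)) - g‖ := this
        _ ≤ |D| / 3 := hplt.le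
    have hpeq : ∫ k, (p : C(ℕ → Set.Icc (0:ℝ) 1, ℝ)) k ∂(μ₁.map Φ)
        = ∫ k, (p : C(ℕ → Set.Icc (0:ℝ) 1, ℝ)) k ∂(μ₂.map Φ) := hAint _ p.2
    have hb1 := hb (μ₁.map Φ)
    have hb2 := hb (μ₂.map Φ)
    have : |D| ≤ 2 * (|D| / 3) := by
      have habs : |D| ≤ |(∫ k, (p : C(ℕ → Set.Icc (0:ℝ) 1, ℝ)) k ∂(μ₁.map Φ))
            - ∫ k, g k ∂(μ₁.map Φ)|
          + |(∫ k, (p : C(ℕ → Set.Icc (0:ℝ) 1, ℝ)) k ∂(μ₂.map Φ))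
            - ∫ k, g k ∂(μ₂.map Φ)| := by
        rw [hD]
        have := abs_sub (((∫ k, (p : C(ℕ → Set.Icc (0:ℝ) 1, ℝ)) k ∂(μ₁.map Φ))
          - ∫ k, g k ∂(μ₁.map Φ))) (((∫ k, (p : C(ℕ → Set.Icc (0:ℝ) 1, ℝ)) k ∂(μ₂.map Φ))
          - ∫ k, g k ∂(μ₂.map Φ)))
        calc |∫ k, g k ∂(μ₁.map Φ) - ∫ k, g k ∂(μ₂.map Φ)|
            = |((∫ k, (p : C(ℕ → Set.Icc (0:ℝ) 1, ℝ)) k ∂(μ₂.map Φ)) - ∫ k, g k ∂(μ₂.map Φ))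
              - ((∫ k, (p : C(ℕ → Set.Icc (0:ℝ) 1, ℝ)) k ∂(μ₁.map Φ))
                - ∫ k, g k ∂(μ₁.map Φ))| := by
              rw [hpeq]; ring_nf
          _ ≤ _ := by
              rw [abs_sub_comm]
              exact (abs_sub _ _).trans (by rw [add_comm])
      linarith
    linarith
  -- Step B : the pushforward measures agree
  have hmap : μ₁.map Φ = μ₂.map Φ := by
    apply ext_of_forall_lintegral_eq_of_IsFiniteMeasure
    intro g
    have hc : Continuous fun k : ℕ → Set.Icc (0:ℝ) 1 => ((g k : NNReal) : ℝ) :=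
      NNReal.continuous_coe.comp g.continuous
    have hint1 : Integrable (fun k => ((g k : NNReal) : ℝ)) (μ₁.map Φ) :=
      hint ⟨_, hc⟩ _
    have hint2 : Integrable (fun k => ((g k : NNReal) : ℝ)) (μ₂.map Φ) :=
      hint ⟨_, hc⟩ _
    rw [lintegral_coe_eq_integral _ hint1, lintegral_coe_eq_integral _ hint2]
    congr 1
    exact key ⟨_, hc⟩
  -- Step C : the "inverse" of Φ on its range is sequentially continuous
  have hmemT : ∀ x : M, Φ x ∈ Set.range Φ := fun x => Set.mem_range_self x
  set gi : Set.range Φ → M := fun k => k.2.choose with hgi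
  have hgspec : ∀ k : Set.range Φ, Φ (gi k) = (k : ℕ → Set.Icc (0:ℝ) 1) :=
    fun k => k.2.choose_spec
  have hgiΦ : ∀ x : M, gi ⟨Φ x, hmemT x⟩ = x := fun x => hΦinj (hgspec ⟨Φ x, hmemT x⟩)
  have hgseq : SeqContinuous gi := by
    intro u l hul
    have hcoord : ∀ χ ∈ S,
        Tendsto (fun n => χ (gi (u n))) atTop (𝓝 ((fun χ : M → ℝ => χ (gi l)) χ)) := by
      intro χ hχ
      obtain ⟨m, rfl⟩ := hrange χ hχ
      have h1 : Tendsto (fun n => (u n : ℕ → Set.Icc (0:ℝ) 1)) atTop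
          (𝓝 (l : ℕ → Set.Icc (0:ℝ) 1)) := (continuous_subtype_val.tendsto _).comp hul
      have h2 : Tendsto (fun n => ((u n : ℕ → Set.Icc (0:ℝ) 1) m : ℝ)) atTop
          (𝓝 ((l : ℕ → Set.Icc (0:ℝ) 1) m : ℝ)) :=
        (continuous_subtype_val.tendsto _).comp (((continuous_apply m).tendsto _).comp h1)
      have e1 : (fun n => f m (gi (u n)))
          = fun n => ((u n : ℕ → Set.Icc (0:ℝ) 1) m : ℝ) := funext fun n => by
        rw [← hgspec (u n)]
      have e2 : f m (gi l) = ((l : ℕ → Set.Icc (0:ℝ) 1) m : ℝ) := by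
        rw [← hgspec l]
      rw [show (fun n => f m (gi (u n))) = fun n => ((u n : ℕ → Set.Icc (0:ℝ) 1) m : ℝ) from e1]
      simpa [e2] using h2
    obtain ⟨a, ha, hval⟩ := hS.limit_exists (fun n => gi (u n)) (fun χ => χ (gi l)) hcoord
      (hS.exists_ne_zero (gi l))
    have hla : gi l = a := hS.eq_of_forall fun χ hχ => hval χ hχ
    show Tendsto (fun n => gi (u n)) atTop (𝓝 (gi l))
    rw [hla]
    exact ha
  have hgcont : Continuous gi := hgseq.continuous
  -- Step D : conclude equality on open sets, hence everywhere
  have hopen : ∀ s ∈ {s : Set M | IsOpen s}, μ₁ s = μ₂ s := by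
    intro s hs
    obtain ⟨U, hU, hUeq⟩ := isOpen_induced_iff.1 (hs.preimage hgcont)
    have hpre : Φ ⁻¹' U = s := by
      ext x
      constructor
      · intro hx
        have hmem : (⟨Φ x, hmemT x⟩ : Set.range Φ) ∈ Subtype.val ⁻¹' U := hx
        rw [hUeq] at hmem
        simpa [hgiΦ x] using hmem
      · intro hx
        have hmem : (⟨Φ x, hmemT x⟩ : Set.range Φ) ∈ gi ⁻¹' s := by
          simpa [hgiΦ x] using hx
        rw [← hUeq] at hmem
        exact hmem
    calc μ₁ s = μ₁ (Φ ⁻¹' U) := by rw [hpre]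
      _ = (μ₁.map Φ) U := (Measure.map_apply hΦm hU.measurableSet).symm
      _ = (μ₂.map Φ) U := by rw [hmap]
      _ = μ₂ (Φ ⁻¹' U) := Measure.map_apply hΦm hU.measurableSet
      _ = μ₂ s := by rw [hpre]
  refine ext_of_generate_finite {s : Set M | IsOpen s} ?_ isPiSystem_isOpen hopen (by simp)
  rw [BorelSpace.measurable_eq (α := M)]
  rfl

end Aux

/-- characterization of the `⊕`-convolution: for Borel
probability measures `μ, ν, λ` on a Feller topological monoid, `μ ⊕ ν = λ` if
and only if `(∫ χ dμ) · (∫ χ dν) = ∫ χ dλ` for every character `χ` of the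
determining class. -/
theorem FellerClass.mulConv_eq_iff {M : Type*} [TopologicalSpace M] [CommMonoid M]
    [ContinuousMul M] [LocallyCompactSpace M] [SecondCountableTopology M] [T2Space M]
    [MeasurableSpace M] [BorelSpace M]
    {S : Set (M → ℝ)} (hS : FellerClass M S)
    (μ ν lam : Measure M)
    [IsProbabilityMeasure μ] [IsProbabilityMeasure ν] [IsProbabilityMeasure lam] :
    mulConv μ ν = lam ↔
      ∀ χ ∈ S, (∫ x, χ x ∂μ) * (∫ x, χ x ∂ν) = ∫ x, χ x ∂lam := by
  have hm : Measurable (fun p : M × M => p.1 * p.2) := measurable_mul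
  have hconv : ∀ χ ∈ S, ∫ x, χ x ∂(mulConv μ ν) = (∫ x, χ x ∂μ) * ∫ x, χ x ∂ν := by
    intro χ hχ
    rw [mulConv, integral_map hm.aemeasurable (hS.measurable χ hχ).aestronglyMeasurable]
    simp_rw [hS.map_mul χ hχ]
    exact integral_prod_mul (fun x => χ x) fun x => χ x
  constructor
  · rintro rfl χ hχ
    exact (hconv χ hχ).symm
  · intro h
    haveI : IsProbabilityMeasure (mulConv μ ν) := by
      rw [mulConv]
      exact Measure.isProbabilityMeasure_map hm.aemeasurable
    exact hS.measure_ext (mulConv μ ν) lam fun χ hχ => (hconv χ hχ).trans (h χ hχ)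
end
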